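/- Let G be a finite p-group and i ≥ 1. Then the i-th derived subgroup G^{(i)} is contained in the kernel of every complex representation of G of dimension at most p^{i-1}. -/

import Mathlib

/-!
Induct on `dim V`, showing that `G⁽ⁱ⁺¹⁾` acts trivially when `dim V ≤ p ^ i`. If `G` acts by
scalars, `G'` acts trivially. Otherwise let `S` be the normal subgroup acting by scalars; as
`G ⧸ S` is a nontrivial `p`-group, some `a ∉ S` is central modulo `S`, so
`ρ (x⁻¹ a x) = ν x • ρ a` for a character `ν`, and `ρ x` maps the `μ`-eigenspace of `ρ a`
injectively into the `ν x * μ`-eigenspace. The eigenspaces of `ρ a` span `V`, are proper (as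
`a ∉ S`) and are stable under `ker ν`. If `ν = 1`, induction applies to `G` acting on each of
them. Otherwise the `|ν(G)| ≥ p` eigenspaces for the `ν x * μ` are independent and at least as
large as the `μ`-eigenspace, which therefore has dimension at most `p ^ (i - 1)`; since
`G' ≤ ker ν`, `G⁽ⁱ⁺¹⁾ ≤ (ker ν)⁽ⁱ⁾`, which acts trivially on it by induction.
-/

open Module
open scoped commutatorElement

theorem iSupIndep.sum_finrank_le {ι K V : Type*} [Fintype ι] [Field K] [AddCommGroup V]
    [Module K V] [FiniteDimensional K V] {W : ι → Submodule K V} (hW : iSupIndep W) :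
    ∑ i, finrank K (W i) ≤ finrank K V := by
  classical
  rw [← finrank_directSum]
  exact LinearMap.finrank_le_finrank_of_injective hW.dfinsupp_lsum_injective

theorem Module.End.isSemisimple_of_pow_eq_one {K V : Type*} [Field K] [AddCommGroup V]
    [Module K V] {f : End K V} {n : ℕ} (hn : (n : K) ≠ 0) (hf : f ^ n = 1) : f.IsSemisimple :=
  isSemisimple_of_squarefree_aeval_eq_zero
    (Polynomial.separable_X_pow_sub_C 1 hn one_ne_zero).squarefree (by simp [hf])

theorem LinearMap.eq_of_eqOn_iSup_eq_top {ι R M N : Type*} [Semiring R] [AddCommMonoid M]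
    [AddCommMonoid N] [Module R M] [Module R N] {f g : M →ₗ[R] N} {W : ι → Submodule R M}
    (hW : ⨆ i, W i = ⊤) (h : ∀ i, ∀ v ∈ W i, f v = g v) : f = g := by
  have : ⨆ i, W i ≤ LinearMap.eqLocus f g := iSup_le fun i v hv => h i v hv
  exact ext fun v => this (hW ▸ Submodule.mem_top)

theorem Nat.exists_eq_add_one_and_le_pow_of_mul_le_pow {p d i : ℕ} (hp : 2 ≤ p) (hd : 1 ≤ d)
    (h : p * d ≤ p ^ i) : ∃ j, i = j + 1 ∧ d ≤ p ^ j := by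
  obtain _ | j := i
  · rw [pow_zero] at h
    nlinarith
  · exact ⟨j, rfl, Nat.le_of_mul_le_mul_left (by rwa [pow_succ'] at h) (by omega)⟩

theorem derivedSeries_succ_le_map_subtype {G : Type*} [Group G] {H : Subgroup G}
    (hH : commutator G ≤ H) (n : ℕ) :
    derivedSeries G (n + 1) ≤ (derivedSeries H n).map H.subtype := by
  induction n with
  | zero => simpa [← MonoidHom.range_eq_map] using hH
  | succ n ih =>
    rw [derivedSeries_succ G (n + 1), derivedSeries_succ H n, Subgroup.map_commutator]
    exact Subgroup.commutator_mono ih ih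

namespace IsPGroup

variable {p : ℕ} [Fact p.Prime] {G : Type*} [Group G] [Finite G]

theorem exists_notMem_mem_upperCentralSeriesStep (hG : IsPGroup p G) {N : Subgroup G}
    [N.Normal] (hN : N ≠ ⊤) : ∃ a ∉ N, a ∈ N.upperCentralSeriesStep := by
  have : Nontrivial (G ⧸ N) := QuotientGroup.nontrivial_iff.mpr hN
  have := (hG.to_quotient N).center_nontrivial
  obtain ⟨z, hz⟩ := exists_ne (1 : Subgroup.center (G ⧸ N))
  obtain ⟨a, ha⟩ := QuotientGroup.mk_surjective (z : G ⧸ N)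
  refine ⟨a, ?_, ?_⟩
  · rw [← QuotientGroup.eq_one_iff, ha]
    exact fun h => hz (Subtype.ext h)
  · rw [Subgroup.upperCentralSeriesStep_eq_comap_center, Subgroup.mem_comap]
    simp [ha]

theorem prime_le_card_range (hG : IsPGroup p G) {H : Type*} [Group H] {f : G →* H}
    (hf : f ≠ 1) : p ≤ Nat.card f.range := by
  have : Finite f.range := Finite.of_surjective _ f.rangeRestrict_surjective
  rcases (hG.of_surjective _ f.rangeRestrict_surjective).card_eq_or_dvd with h | h
  · exact absurd (f.range_eq_bot_iff.mp (Subgroup.card_eq_one.mp h)) hf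
  · exact Nat.le_of_dvd Nat.card_pos h

end IsPGroup

namespace Representation

variable {k G V : Type*} [Field k] [Group G] [AddCommGroup V] [Module k V]
  (ρ : Representation k G V)

def scalarSubgroup : Subgroup G :=
  (Units.map (algebraMap k (End k V) : k →* End k V)).range.comap ρ.asGroupHom

theorem mem_scalarSubgroup {g : G} :
    g ∈ ρ.scalarSubgroup ↔ ∃ c : kˣ, algebraMap k (End k V) c = ρ g := by
  simp [scalarSubgroup, Units.ext_iff, asGroupHom_apply]

instance : ρ.scalarSubgroup.Normal where
  conj_mem g hg x := by
    obtain ⟨c, hc⟩ := ρ.mem_scalarSubgroup.mp hg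
    refine ρ.mem_scalarSubgroup.mpr ⟨c, ?_⟩
    rw [map_mul, map_mul, ← hc, ← Algebra.commutes, mul_assoc, ← map_mul, mul_inv_cancel,
      map_one, mul_one]

theorem commutator_le_ker_of_scalarSubgroup_eq_top (h : ρ.scalarSubgroup = ⊤) :
    commutator G ≤ ρ.ker := by
  rw [commutator_def, Subgroup.commutator_le]
  intro x _ y _
  obtain ⟨c, hc⟩ := Subgroup.mem_comap.mp (h ▸ Subgroup.mem_top x)
  obtain ⟨d, hd⟩ := Subgroup.mem_comap.mp (h ▸ Subgroup.mem_top y)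
  have : ρ.asGroupHom ⁅x, y⁆ = 1 := by
    rw [map_commutatorElement, ← hc, ← hd, ← map_commutatorElement,
      commutatorElement_eq_one_iff_commute.mpr (Commute.all c d), map_one]
  rw [MonoidHom.mem_ker, ← asGroupHom_apply, this, Units.val_one]

theorem mem_scalarSubgroup_of_eigenspace_eq_top {g : G} {μ : k} (hμ : μ ≠ 0)
    (h : End.eigenspace (ρ g) μ = ⊤) : g ∈ ρ.scalarSubgroup := by
  refine ρ.mem_scalarSubgroup.mpr ⟨Units.mk0 μ hμ, LinearMap.ext fun v => ?_⟩
  have hv := End.mem_eigenspace_iff.mp (h ▸ Submodule.mem_top : v ∈ End.eigenspace (ρ g) μ)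
  simp [hv]

theorem eigenspace_zero_eq_bot (g : G) : End.eigenspace (ρ g) 0 = ⊥ := by
  rw [End.eigenspace_zero, LinearMap.ker_eq_bot]
  exact fun v w h => by simpa using congrArg (ρ g⁻¹) h

theorem iSup_eigenspace_eq_top [IsAlgClosed k] [CharZero k] [Finite G] [FiniteDimensional k V]
    (g : G) : ⨆ μ, End.eigenspace (ρ g) μ = ⊤ :=
  (End.isSemisimple_of_pow_eq_one (n := Nat.card G) (by simp [Nat.card_pos.ne'])
    (by rw [← map_pow, pow_card_eq_one', map_one])).iSup_eigenspace_eq_top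

theorem exists_conj_eq_smul [Nontrivial V] {a : G}
    (ha : a ∈ ρ.scalarSubgroup.upperCentralSeriesStep) :
    ∃ ν : G →* kˣ, ∀ x, ρ (x⁻¹ * a * x) = (ν x : k) • ρ a := by
  have hmem (x : G) : ⁅x⁻¹, a⁆ ∈ ρ.scalarSubgroup := by
    rw [← commutatorElement_inv]
    exact inv_mem (ha x⁻¹)
  choose c hc using fun x => ρ.mem_scalarSubgroup.mp (hmem x)
  have hconj (x : G) : ρ (x⁻¹ * a * x) = (c x : k) • ρ a := by
    rw [Algebra.smul_def, hc, ← map_mul, commutatorElement_def, inv_inv, inv_mul_cancel_right]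
  have hinj : Function.Injective fun t : k => t • ρ a := by
    refine smul_left_injective k ?_
    simpa [asGroupHom_apply] using (ρ.asGroupHom a).ne_zero
  refine ⟨MonoidHom.mk' c fun x y => Units.ext (hinj ?_), hconj⟩
  simp only [← hconj, Units.val_mul, mul_smul]
  rw [show (x * y)⁻¹ * a * (x * y) = y⁻¹ * (x⁻¹ * a * x) * y by group, map_mul, map_mul,
    hconj, mul_smul_comm, smul_mul_assoc, ← map_mul, ← map_mul]

section Eigenspaces

variable {ρ} {a : G} {ν : G →* kˣ} (hν : ∀ x, ρ (x⁻¹ * a * x) = (ν x : k) • ρ a)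
include hν

theorem apply_mem_eigenspace (x : G) {μ : k} {v : V} (hv : v ∈ End.eigenspace (ρ a) μ) :
    ρ x v ∈ End.eigenspace (ρ a) (ν x * μ) := by
  rw [End.mem_eigenspace_iff] at hv ⊢
  have hcomm : ρ a * ρ x = ρ x * (ν x : k) • ρ a := by
    rw [← hν, ← map_mul, ← map_mul]
    group
  rw [← End.mul_apply, hcomm, End.mul_apply, LinearMap.smul_apply, hv, smul_smul, map_smul]

def eigenspaceSubrepresentation (μ : k) : Subrepresentation (ρ.comp ν.ker.subtype) :=
  ⟨End.eigenspace (ρ a) μ, fun x v hv => by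
    simpa [MonoidHom.mem_ker.mp x.2] using apply_mem_eigenspace hν x hv⟩

theorem finrank_eigenspace_le [FiniteDimensional k V] (x : G) (μ : k) :
    finrank k (End.eigenspace (ρ a) μ) ≤ finrank k (End.eigenspace (ρ a) (ν x * μ)) := by
  refine LinearMap.finrank_le_finrank_of_injective
    (f := (ρ x).restrict fun _ => apply_mem_eigenspace hν x) fun v w h => ?_
  simpa using congrArg (fun u => ρ x⁻¹ u.1) h

theorem card_range_mul_finrank_eigenspace_le [Finite G] [FiniteDimensional k V] {μ : k}
    (hμ : μ ≠ 0) : Nat.card ν.range * finrank k (End.eigenspace (ρ a) μ) ≤ finrank k V := by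
  have : Finite ν.range := Finite.of_surjective _ ν.rangeRestrict_surjective
  have : Fintype ν.range := Fintype.ofFinite _
  have hind : iSupIndep fun t : ν.range => End.eigenspace (ρ a) ((t : kˣ) * μ) :=
    (End.eigenspaces_iSupIndep (ρ a)).comp fun s t hst =>
      Subtype.ext (Units.ext (mul_right_cancel₀ hμ hst))
  calc Nat.card ν.range * finrank k (End.eigenspace (ρ a) μ)
      = ∑ _t : ν.range, finrank k (End.eigenspace (ρ a) μ) := by
        rw [Finset.sum_const, Finset.card_univ, smul_eq_mul, Nat.card_eq_fintype_card]
    _ ≤ ∑ t : ν.range, finrank k (End.eigenspace (ρ a) ((t : kˣ) * μ)) := by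
        refine Finset.sum_le_sum fun t _ => ?_
        obtain ⟨x, hx⟩ := t.2
        rw [← hx]
        exact finrank_eigenspace_le hν x μ
    _ ≤ finrank k V := hind.sum_finrank_le

end Eigenspaces

end Representation

theorem IsPGroup.derivedSeries_succ_le_ker {p : ℕ} [Fact p.Prime] {G : Type*} [Group G]
    [Finite G] (hG : IsPGroup p G) {V : Type*} [AddCommGroup V] [Module ℂ V]
    [FiniteDimensional ℂ V] (ρ : Representation ℂ G V) {i : ℕ} (hV : finrank ℂ V ≤ p ^ i) :
    derivedSeries G (i + 1) ≤ ρ.ker := by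
  induction hn : finrank ℂ V using Nat.strong_induction_on generalizing G V i with
  | _ n ih =>
  subst hn
  rcases subsingleton_or_nontrivial V with hV₀ | hV₀
  · exact fun g _ => Subsingleton.elim _ _
  by_cases hS : ρ.scalarSubgroup = ⊤
  · exact (derivedSeries_antitone G (Nat.le_add_left 1 i)).trans
      (ρ.commutator_le_ker_of_scalarSubgroup_eq_top hS)
  obtain ⟨a, haS, ha⟩ := hG.exists_notMem_mem_upperCentralSeriesStep hS
  obtain ⟨ν, hν⟩ := ρ.exists_conj_eq_smul ha
  intro g hg
  refine MonoidHom.mem_ker.mpr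
    (LinearMap.eq_of_eqOn_iSup_eq_top (ρ.iSup_eigenspace_eq_top a) fun μ v hv => ?_)
  rcases eq_or_ne (End.eigenspace (ρ a) μ) ⊥ with hbot | hne
  · simp [show v = 0 by simpa [hbot] using hv]
  have hμ : μ ≠ 0 := by
    rintro rfl
    exact hne (ρ.eigenspace_zero_eq_bot a)
  have hlt : finrank ℂ (End.eigenspace (ρ a) μ) < finrank ℂ V :=
    Submodule.finrank_lt fun h => haS (ρ.mem_scalarSubgroup_of_eigenspace_eq_top hμ h)
  suffices ∃ e, finrank ℂ (End.eigenspace (ρ a) μ) ≤ p ^ e ∧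
      g ∈ (derivedSeries ν.ker (e + 1)).map ν.ker.subtype by
    obtain ⟨e, he, y, hy, rfl⟩ := this
    have hW := ih _ hlt (hG.to_subgroup ν.ker)
      (Representation.eigenspaceSubrepresentation hν μ).toRepresentation he rfl hy
    exact congrArg Subtype.val (LinearMap.congr_fun (MonoidHom.mem_ker.mp hW) ⟨v, hv⟩)
  by_cases hν1 : ν = 1
  · refine ⟨i, hlt.le.trans hV, derivedSeries_le_map_derivedSeries (fun x => ?_) _ hg⟩
    exact ⟨⟨x, MonoidHom.mem_ker.mpr (by simp [hν1])⟩, rfl⟩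
  obtain ⟨j, rfl, hj⟩ := Nat.exists_eq_add_one_and_le_pow_of_mul_le_pow
    (Fact.out : p.Prime).two_le (Submodule.one_le_finrank_iff.mpr hne)
    ((Nat.mul_le_mul_right _ (hG.prime_le_card_range hν1)).trans
      ((ρ.card_range_mul_finrank_eigenspace_le hν hμ).trans hV))
  exact ⟨j, hj, derivedSeries_succ_le_map_subtype (Abelianization.commutator_subset_ker ν) _ hg⟩

/-- For a finite p-group `G` and `i ≥ 1`, the `i`-th derived subgroup
`G⁽ⁱ⁾` lies in the kernel of every complex representation of `G` of
dimension at most `p^{i-1}`. -/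
theorem stmt13 {p : ℕ} (hp : p.Prime) {G : Type*} [Group G] [Finite G]
    (hG : IsPGroup p G) (i : ℕ) (hi : 1 ≤ i)
    (V : Type*) [AddCommGroup V] [Module ℂ V] [FiniteDimensional ℂ V]
    (ρ : Representation ℂ G V)
    (hdim : Module.finrank ℂ V ≤ p ^ (i - 1)) :
    ∀ g ∈ derivedSeries G i, ρ g = 1 := by
  have := Fact.mk hp
  obtain ⟨j, rfl⟩ : ∃ j, i = j + 1 := Nat.exists_eq_add_one.mpr hi
  exact fun g hg => hG.derivedSeries_succ_le_ker ρ hdim hg
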